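/- Let k_φ be the least k with σ_φ^{k+1}(W⁰,R⁰) = σ_φ^{k}(W⁰,R⁰) and let (W^{k_φ},R^{k_φ}) := σ_φ^{k_φ}(W⁰,R⁰). Then the frame (W^{k_φ},R^{k_φ}) is dense: for all tips x,y ∈ W^{k_φ}, if x R^{k_φ} y then there exists z ∈ W^{k_φ} with x R^{k_φ} z and z R^{k_φ} y. -/
import Mathlib


/-- Formulas of unimodal modal logic. -/
inductive Formula : Type
  | atom : ℕ → Formula
  | falsum : Formula
  | neg : Formula → Formula
  | and : Formula → Formula → Formula
  | box : Formula → Formula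
deriving DecidableEq

/-- Material implication, as the usual classical abbreviation. -/
def Formula.imp (φ ψ : Formula) : Formula := .neg (.and φ (.neg ψ))

/-- Disjunction, as the usual classical abbreviation. -/
def Formula.or (φ ψ : Formula) : Formula := .neg (.and (.neg φ) (.neg ψ))

/-- Uniform substitution of formulas for atoms. -/
def fsubst (σ : ℕ → Formula) : Formula → Formula
  | .atom q => σ q
  | .falsum => .falsum
  | .neg φ => .neg (fsubst σ φ)
  | .and φ ψ => .and (fsubst σ φ) (fsubst σ ψ)
  | .box φ => .box (fsubst σ φ)

/-- A Boolean valuation of the modal language: a Boolean assignment respecting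
`⊥`, `¬` and `∧` (boxed formulas are treated as atoms). -/
def IsBoolVal (v : Formula → Bool) : Prop :=
  v .falsum = false ∧ (∀ φ, v (.neg φ) = !(v φ)) ∧
  (∀ φ ψ, v (.and φ ψ) = (v φ && v ψ))

/-- Classical propositional tautologies of the modal language. -/
def Tautology (φ : Formula) : Prop := ∀ v, IsBoolVal v → v φ = true

/-- A modal logic: a set of formulas closed under uniform substitution and modus
ponens, containing all classical propositional tautologies, containing the axioms
`□p∧□q→□(p∧q)` and `□⊤`, and closed under the rule: from `φ→ψ` infer `□φ→□ψ`. -/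
structure IsModalLogic (L : Set Formula) : Prop where
  taut : ∀ φ, Tautology φ → φ ∈ L
  mp : ∀ φ ψ, Formula.imp φ ψ ∈ L → φ ∈ L → ψ ∈ L
  subst : ∀ φ σ, φ ∈ L → fsubst σ φ ∈ L
  axK : Formula.imp (.and (.box (.atom 0)) (.box (.atom 1)))
          (.box (.and (.atom 0) (.atom 1))) ∈ L
  axTop : Formula.box (.neg .falsum) ∈ L
  mono : ∀ φ ψ, Formula.imp φ ψ ∈ L → Formula.imp (.box φ) (.box ψ) ∈ L

/-- An `L`-theory: a set of formulas containing `L` and closed under modus ponens. -/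
def IsTheory (L Γ : Set Formula) : Prop :=
  L ⊆ Γ ∧ ∀ φ ψ, Formula.imp φ ψ ∈ Γ → φ ∈ Γ → ψ ∈ Γ

/-- A prime `L`-theory: a proper `L`-theory `Γ` (i.e. `⊥ ∉ Γ`) such that
`φ∨ψ ∈ Γ` implies `φ ∈ Γ` or `ψ ∈ Γ`. -/
def IsPrime (L Γ : Set Formula) : Prop :=
  IsTheory L Γ ∧ Formula.falsum ∉ Γ ∧
  ∀ φ ψ, Formula.or φ ψ ∈ Γ → φ ∈ Γ ∨ ψ ∈ Γ

/-- `□Γ := {φ : □φ ∈ Γ}`. -/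
def boxInv (Γ : Set Formula) : Set Formula := {φ | Formula.box φ ∈ Γ}

/-- `KDe`: the least modal logic containing `□□p → □p`. -/
def KDe : Set Formula :=
  ⋂₀ {L : Set Formula |
        IsModalLogic L ∧ Formula.imp (.box (.box (.atom 0))) (.box (.atom 0)) ∈ L}

/-- The set of subformulas of a formula. -/
def Subf : Formula → Set Formula
  | .atom p => {.atom p}
  | .falsum => {.falsum}
  | .neg φ => insert (.neg φ) (Subf φ)
  | .and φ ψ => insert (.and φ ψ) (Subf φ ∪ Subf ψ)
  | .box φ => insert (.box φ) (Subf φ)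

/-- `ψs` is an admissible enumeration of the subformulas of `φ`: it enumerates
`Σ_φ` without repetition, and components of a subformula come earlier. -/
def IsEnum (φ : Formula) {n : ℕ} (ψs : Fin n → Formula) : Prop :=
  Function.Injective ψs ∧ Set.range ψs = Subf φ ∧
  (∀ i j : Fin n, ψs i = .neg (ψs j) → j < i) ∧
  (∀ i j k : Fin n, ψs i = .and (ψs j) (ψs k) → j < i ∧ k < i) ∧
  (∀ i j : Fin n, ψs i = .box (ψs j) → j < i)

/-- A `φ`-tip: a tuple of bits respecting the Boolean structure of the enumerated
subformulas. -/
def IsTip {n : ℕ} (ψs : Fin n → Formula) (a : Fin n → Bool) : Prop :=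
  (∀ i : Fin n, ψs i = .falsum → a i = false) ∧
  (∀ i j : Fin n, ψs i = .neg (ψs j) → a i = !(a j)) ∧
  (∀ i j k : Fin n, ψs i = .and (ψs j) (ψs k) → a i = (a j && a k))

/-- `W⁰`: the set of all `φ`-tips. -/
def tips {n : ℕ} (ψs : Fin n → Formula) : Set (Fin n → Bool) := {a | IsTip ψs a}

/-- `R⁰`: the relation on `W⁰` with `a R⁰ b` iff whenever `ψ_i = □ψ_j` and `a_i = 1`
then `b_j = 1`. -/
def R0 {n : ℕ} (ψs : Fin n → Formula) (a b : Fin n → Bool) : Prop :=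
  a ∈ tips ψs ∧ b ∈ tips ψs ∧
  ∀ i j : Fin n, ψs i = .box (ψs j) → a i = true → b j = true

open Classical in
/-- `τ_φ(s)`: the tuple of bits recording which enumerated subformulas belong to the
theory `s`. -/
noncomputable def tipOf {n : ℕ} (ψs : Fin n → Formula) (s : Set Formula) :
    Fin n → Bool :=
  fun i => if ψs i ∈ s then true else false

/-- A `φ`-clip: `(W,R)` with `W ⊆ W⁰`, `R` a relation on `W` included in `R⁰`,
containing the tips of all prime `KDe`-theories and the `R`-edges coming from
the canonical relation between prime `KDe`-theories. -/
structure IsClip {n : ℕ} (ψs : Fin n → Formula)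
    (W : Set (Fin n → Bool)) (R : (Fin n → Bool) → (Fin n → Bool) → Prop) : Prop where
  wsub : W ⊆ tips ψs
  rmem : ∀ a b, R a b → a ∈ W ∧ b ∈ W
  rsub : ∀ a b, R a b → R0 ψs a b
  tmem : ∀ s : Set Formula, IsPrime KDe s → tipOf ψs s ∈ W
  tedge : ∀ s t : Set Formula, IsPrime KDe s → IsPrime KDe t → boxInv s ⊆ t →
    R (tipOf ψs s) (tipOf ψs t)

/-- The set of worlds of `σ_φ(W,R)`. -/
def sigmaW {n : ℕ} (ψs : Fin n → Formula) (W : Set (Fin n → Bool))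
    (R : (Fin n → Bool) → (Fin n → Bool) → Prop) : Set (Fin n → Bool) :=
  {a | a ∈ W ∧ ∀ i j : Fin n, ψs i = .box (ψs j) → a i = false →
         ∃ b ∈ W, R a b ∧ b j = false}

/-- The relation of `σ_φ(W,R)`: `a R' b` iff `a, b` survive in `σ_φ(W,R)`, `a R b`,
and there is `c ∈ W` with `a R c` and `c R b`. -/
def sigmaR {n : ℕ} (ψs : Fin n → Formula) (W : Set (Fin n → Bool))
    (R : (Fin n → Bool) → (Fin n → Bool) → Prop) :
    (Fin n → Bool) → (Fin n → Bool) → Prop :=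
  fun a b => a ∈ sigmaW ψs W R ∧ b ∈ sigmaW ψs W R ∧ R a b ∧
    ∃ c ∈ W, R a c ∧ R c b

/-- `σ_φ` as an operation on pairs `(W,R)`. -/
def sigmaPair {n : ℕ} (ψs : Fin n → Formula) :
    Set (Fin n → Bool) × ((Fin n → Bool) → (Fin n → Bool) → Prop) →
    Set (Fin n → Bool) × ((Fin n → Bool) → (Fin n → Bool) → Prop) :=
  fun X => (sigmaW ψs X.1 X.2, sigmaR ψs X.1 X.2)

/-- The initial pair `(W⁰, R⁰)`. -/
def X0 {n : ℕ} (ψs : Fin n → Formula) :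
    Set (Fin n → Bool) × ((Fin n → Bool) → (Fin n → Bool) → Prop) :=
  (tips ψs, R0 ψs)

/-- Let `k_φ` be the least `k` with `σ_φ^{k+1}(W⁰,R⁰) = σ_φ^{k}(W⁰,R⁰)`.  Then the
frame `σ_φ^{k_φ}(W⁰,R⁰)` is dense. -/
theorem stmt11 (φ : Formula) {n : ℕ} (ψs : Fin n → Formula) (henum : IsEnum φ ψs)
    (k : ℕ)
    (hfix : (sigmaPair ψs)^[k + 1] (X0 ψs) = (sigmaPair ψs)^[k] (X0 ψs))
    (hleast : ∀ j : ℕ, (sigmaPair ψs)^[j + 1] (X0 ψs) = (sigmaPair ψs)^[j] (X0 ψs) →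
      k ≤ j) :
    ∀ x y : Fin n → Bool, ((sigmaPair ψs)^[k] (X0 ψs)).2 x y →
      ∃ z : Fin n → Bool, ((sigmaPair ψs)^[k] (X0 ψs)).2 x z ∧
        ((sigmaPair ψs)^[k] (X0 ψs)).2 z y := by
  intro x y hxy
  rw [← hfix, Function.iterate_succ_apply'] at hxy
  obtain ⟨_, _, _, c, _, hxc, hcy⟩ := hxy
  exact ⟨c, hxc, hcy⟩
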